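/- Let q be a prime power, let l ≥ 1, let a_1, ..., a_l be distinct elements of F_q, let D = F_q \ {a_1, ..., a_l}, and let 1 ≤ k ≤ q - l - 1. Fix j with 1 ≤ j ≤ l and set f_j(x) = (x - a_j)^{q-2}. Then there exists a polynomial g ∈ F_q[x] of degree at most k-1 such that #{y ∈ D : f_j(y) = g(y)} = k. Concretely, choosing k distinct nonzero elements c_1, ..., c_k of F_q \ {a_1 - a_j, ..., a_l - a_j} and setting g_j(x) = (1/x)(1 - ∏_{i=1}^{k}(1 - c_i^{-1} x)) (which is a polynomial of degree k-1), the polynomial g(x) = g_j(x - a_j) agrees with f_j exactly at the k points c_1 + a_j, ..., c_k + a_j, all of which lie in D. -/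

import Mathlib

/-!
Write `P(x) = 1 - ∏ᵢ (1 - cᵢ⁻¹ x)`. Since `P(0) = 0`, `P = x g` for a polynomial `g` of degree
`k - 1`, and for `x ≠ 0` we have `g(x) = x⁻¹` iff `x g(x) = 1` iff some factor `1 - cᵢ⁻¹ x`
vanishes, i.e. iff `x` is one of the `cᵢ`. On a finite field `x ^ (q - 2) = x⁻¹` for `x ≠ 0`,
so after the shift `x ↦ x - a_j` the polynomial `g(x - a_j)` agrees with `f_j` on `D` exactly
at the points `cᵢ + a_j`.
-/

open Polynomial

theorem FiniteField.pow_card_sub_two_eq_inv {K : Type*} [Field K] [Fintype K] {x : K}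
    (hx : x ≠ 0) : x ^ (Fintype.card K - 2) = x⁻¹ := by
  have hcard : Fintype.card K - 2 + 1 = Fintype.card K - 1 := by
    have := Fintype.one_lt_card (α := K); omega
  rw [← mul_eq_one_iff_eq_inv₀ hx, ← pow_succ, hcard]
  exact FiniteField.pow_card_sub_one_eq_one x hx

namespace Polynomial

theorem degree_comp_X_sub_C {R : Type*} [CommRing R] (p : R[X]) (r : R) :
    (p.comp (X - C r)).degree = p.degree := by
  rw [sub_eq_add_neg, ← C_neg, ← taylor_apply, degree_taylor]

variable {K ι : Type*} [Field K] (s : Finset ι) (c : ι → K)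

noncomputable def invInterpolant : K[X] :=
  (1 - ∏ i ∈ s, (1 - C (c i)⁻¹ * X)).divX

theorem X_mul_invInterpolant : X * invInterpolant s c = 1 - ∏ i ∈ s, (1 - C (c i)⁻¹ * X) := by
  have hcoeff : (1 - ∏ i ∈ s, (1 - C (c i)⁻¹ * X)).coeff 0 = 0 := by
    simp [coeff_zero_eq_eval_zero, eval_prod]
  have h := X_mul_divX_add (1 - ∏ i ∈ s, (1 - C (c i)⁻¹ * X))
  rwa [hcoeff, C_0, add_zero] at h

variable {s c}

theorem natDegree_one_sub_C_mul_X {b : K} (hb : b ≠ 0) : (1 - C b * X).natDegree = 1 := by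
  rw [show 1 - C b * X = C (-b) * X + C 1 by rw [C_neg, C_1]; ring]
  exact natDegree_linear (neg_ne_zero.mpr hb)

theorem natDegree_one_sub_prod_one_sub_C_inv_mul_X (hc : ∀ i ∈ s, c i ≠ 0) (hs : s.Nonempty) :
    (1 - ∏ i ∈ s, (1 - C (c i)⁻¹ * X)).natDegree = s.card := by
  have hfac : ∀ i ∈ s, (1 - C (c i)⁻¹ * X).natDegree = 1 := fun i hi =>
    natDegree_one_sub_C_mul_X (inv_ne_zero (hc i hi))
  have hprod : (∏ i ∈ s, (1 - C (c i)⁻¹ * X)).natDegree = s.card := by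
    rw [natDegree_prod _ _ fun i hi => ne_zero_of_natDegree_gt (hfac i hi).symm.le,
      Finset.sum_congr rfl hfac, Finset.card_eq_sum_ones]
  rw [natDegree_sub_eq_right_of_natDegree_lt (by rw [hprod, natDegree_one]; exact hs.card_pos),
    hprod]

theorem natDegree_invInterpolant (hc : ∀ i ∈ s, c i ≠ 0) (hs : s.Nonempty) :
    (invInterpolant s c).natDegree = s.card - 1 := by
  rw [invInterpolant, natDegree_divX_eq_natDegree_tsub_one,
    natDegree_one_sub_prod_one_sub_C_inv_mul_X hc hs]

theorem degree_invInterpolant (hc : ∀ i ∈ s, c i ≠ 0) (hs : s.Nonempty) :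
    (invInterpolant s c).degree = ↑(s.card - 1) := by
  refine (degree_eq_iff_natDegree_eq fun h => ?_).mpr (natDegree_invInterpolant hc hs)
  have := congrArg natDegree (X_mul_invInterpolant s c)
  rw [h, mul_zero, natDegree_zero, natDegree_one_sub_prod_one_sub_C_inv_mul_X hc hs] at this
  exact hs.card_pos.ne this

theorem eval_invInterpolant_eq_inv_iff (hc : ∀ i ∈ s, c i ≠ 0) {x : K} (hx : x ≠ 0) :
    (invInterpolant s c).eval x = x⁻¹ ↔ ∃ i ∈ s, c i = x := by
  have hev := congrArg (eval x) (X_mul_invInterpolant s c)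
  rw [eval_mul, eval_X, eval_sub, eval_one, eval_prod] at hev
  rw [← mul_eq_one_iff_eq_inv₀ hx, mul_comm, hev, sub_eq_self, Finset.prod_eq_zero_iff]
  refine exists_congr fun i => and_congr_right fun hi => ?_
  rw [eval_sub, eval_one, eval_mul, eval_C, eval_X, sub_eq_zero, eq_comm,
    inv_mul_eq_one₀ (hc i hi)]

theorem filter_inv_sub_eq_eval_comp_eq_image [DecidableEq K] (hc : ∀ i ∈ s, c i ≠ 0)
    {D : Finset K} {a : K} (haD : a ∉ D) (hcD : ∀ i ∈ s, c i + a ∈ D) :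
    D.filter (fun y => (y - a)⁻¹ = ((invInterpolant s c).comp (X - C a)).eval y) =
      s.image (fun i => c i + a) := by
  ext y
  simp only [Finset.mem_filter, Finset.mem_image, eval_comp, eval_sub, eval_X, eval_C]
  constructor
  · rintro ⟨hyD, hy⟩
    have hya : y - a ≠ 0 := sub_ne_zero.mpr (ne_of_mem_of_not_mem hyD haD)
    obtain ⟨i, hi, hci⟩ := (eval_invInterpolant_eq_inv_iff hc hya).mp hy.symm
    exact ⟨i, hi, eq_add_of_sub_eq' hci.symm ▸ add_comm _ _⟩
  · rintro ⟨i, hi, rfl⟩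
    rw [add_sub_cancel_right]
    exact ⟨hcD i hi, ((eval_invInterpolant_eq_inv_iff hc (hc i hi)).mpr ⟨i, hi, rfl⟩).symm⟩

end Polynomial

theorem exists_poly_k_agreements_general {F : Type*} [Field F] [Fintype F] [DecidableEq F]
    (q l k : ℕ) (hq : q = Fintype.card F)
    (a : Fin l → F)
    (D : Finset F) (hD : D = Finset.univ \ Finset.image a Finset.univ)
    (hk1 : 1 ≤ k) (j : Fin l)
    (c : Fin k → F) (hc : Function.Injective c)
    (hc0 : ∀ i, c i ≠ 0) (hca : ∀ i t, c i ≠ a t - a j) :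
    (∃ g : F[X], g.degree < (k : ℕ) ∧
        (D.filter (fun y => ((X - C (a j)) ^ (q - 2)).eval y = g.eval y)).card = k) ∧
      ∃ gj : F[X], X * gj = 1 - ∏ i : Fin k, (1 - C (c i)⁻¹ * X) ∧
        gj.degree = ((k - 1 : ℕ) : WithBot ℕ) ∧
        D.filter (fun y =>
            ((X - C (a j)) ^ (q - 2)).eval y = (gj.comp (X - C (a j))).eval y)
          = Finset.image (fun i => c i + a j) Finset.univ ∧
        Finset.image (fun i => c i + a j) Finset.univ ⊆ D ∧
        (Finset.image (fun i => c i + a j) Finset.univ).card = k := by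
  subst hq
  have hc0_univ : ∀ i ∈ Finset.univ, c i ≠ 0 := fun i _ => hc0 i
  have haj : a j ∉ D := by simp [hD]
  have hcD : ∀ i ∈ Finset.univ, c i + a j ∈ D := fun i _ => by
    simpa [hD] using fun t h => hca i t (eq_sub_of_add_eq h.symm)
  have hpow : ∀ y ∈ D, ((X - C (a j)) ^ (Fintype.card F - 2)).eval y = (y - a j)⁻¹ :=
      fun y hy => by
    rw [eval_pow, eval_sub, eval_X, eval_C,
      FiniteField.pow_card_sub_two_eq_inv (sub_ne_zero.mpr (ne_of_mem_of_not_mem hy haj))]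
  have hset : D.filter (fun y => ((X - C (a j)) ^ (Fintype.card F - 2)).eval y =
      ((invInterpolant Finset.univ c).comp (X - C (a j))).eval y) =
      Finset.image (fun i => c i + a j) Finset.univ := by
    rw [Finset.filter_congr fun y hy => by rw [hpow y hy],
      filter_inv_sub_eq_eval_comp_eq_image hc0_univ haj hcD]
  have hcard : (Finset.image (fun i => c i + a j) Finset.univ).card = k := by
    rw [Finset.card_image_of_injective _ fun i i' h => hc (add_right_cancel h), Finset.card_fin]
  have hdeg := degree_invInterpolant hc0_univ ⟨⟨0, hk1⟩, Finset.mem_univ _⟩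
  rw [Finset.card_fin] at hdeg
  refine ⟨⟨_, ?_, hset ▸ hcard⟩, _, X_mul_invInterpolant _ _, hdeg, hset,
    fun y hy => ?_, hcard⟩
  · rw [degree_comp_X_sub_C, hdeg]
    exact_mod_cast Nat.sub_lt hk1 one_pos
  · obtain ⟨i, -, rfl⟩ := Finset.mem_image.mp hy
    exact hcD i (Finset.mem_univ i)

/-- With `D = F_q \ {a_1, ..., a_l}`, `1 ≤ k ≤ q - l - 1` and
`f_j(x) = (x - a_j)^(q-2)`: given `k` distinct nonzero elements `c_1, ..., c_k`
of `F_q \ {a_1 - a_j, ..., a_l - a_j}`, the polynomial `g_j(x)` determined by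
`x * g_j(x) = 1 - ∏ (1 - c_i⁻¹ x)` has degree `k - 1`, and
`g(x) = g_j(x - a_j)` agrees with `f_j` on `D` exactly at the `k` points
`c_1 + a_j, ..., c_k + a_j`, all of which lie in `D`.  In particular there is a
polynomial of degree at most `k - 1` agreeing with `f_j` at exactly `k` points
of `D`. -/
theorem exists_poly_k_agreements {F : Type*} [Field F] [Fintype F] [DecidableEq F]
    (q l k : ℕ) (hq : q = Fintype.card F) (hl : 1 ≤ l)
    (a : Fin l → F) (ha : Function.Injective a)
    (D : Finset F) (hD : D = Finset.univ \ Finset.image a Finset.univ)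
    (hk1 : 1 ≤ k) (hk : k ≤ q - l - 1) (j : Fin l)
    (c : Fin k → F) (hc : Function.Injective c)
    (hc0 : ∀ i, c i ≠ 0) (hca : ∀ i t, c i ≠ a t - a j) :
    (∃ g : F[X], g.degree < (k : ℕ) ∧
        (D.filter (fun y => ((X - C (a j)) ^ (q - 2)).eval y = g.eval y)).card = k) ∧
      ∃ gj : F[X], X * gj = 1 - ∏ i : Fin k, (1 - C (c i)⁻¹ * X) ∧
        gj.degree = ((k - 1 : ℕ) : WithBot ℕ) ∧
        D.filter (fun y =>
            ((X - C (a j)) ^ (q - 2)).eval y = (gj.comp (X - C (a j))).eval y)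
          = Finset.image (fun i => c i + a j) Finset.univ ∧
        Finset.image (fun i => c i + a j) Finset.univ ⊆ D ∧
        (Finset.image (fun i => c i + a j) Finset.univ).card = k :=
  exists_poly_k_agreements_general q l k hq a D hD hk1 j c hc hc0 hca
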